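/- Assume without loss of generality that f* = 0 (so f ≥ 0 on Ω and Ω* = {x ∈ Ω : f(x) = 0}). If Π(Ω*) = ∫_{Ω*} π(x) dx > 0, then for every x ∈ Ω*, lim_{k→∞} m_k(x) = π(x)/Π(Ω*). -/
import Mathlib


open MeasureTheory Filter Set

/-- **Theorem 4(iii)(b) (ProGO).** Assuming WLOG `f* = 0`: if `Π(Ω*) > 0`, then for
every `x ∈ Ω*`, `m_k(x) → π(x)/Π(Ω*)` as `k → ∞`. -/
theorem progo_density_tendsto_ratio_on_minima
    (d : ℕ) (hd : 1 ≤ d)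
    (Ω : Set (EuclideanSpace ℝ (Fin d))) (hΩ : MeasurableSet Ω)
    (f : EuclideanSpace ℝ (Fin d) → ℝ) (hf : ContinuousOn f Ω)
    (hfnn : ∀ x ∈ Ω, 0 ≤ f x)
    (hne : ∃ x ∈ Ω, f x = 0)
    (p : EuclideanSpace ℝ (Fin d) → ℝ)
    (hp_pos : ∀ x, 0 < p x)
    (hp_integrable : Integrable p)
    (hp_one : ∫ x, p x = 1)
    (m : ℝ → EuclideanSpace ℝ (Fin d) → ℝ)
    (hm : ∀ k x, m k x =
      Real.exp (-k * f x) * p x / ∫ t in Ω, Real.exp (-k * f t) * p t)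
    (hpos : 0 < ∫ x in {y ∈ Ω | f y = 0}, p x) :
    ∀ x ∈ Ω, f x = 0 →
      Tendsto (fun k : ℝ => m k x) atTop
        (nhds (p x / ∫ y in {y ∈ Ω | f y = 0}, p y)) := by
  intro x hx hfx
  set S : Set (EuclideanSpace ℝ (Fin d)) := {y ∈ Ω | f y = 0} with hSdef
  have hSsub : S ⊆ Ω := fun y hy => hy.1
  -- measurability of S
  have hS : MeasurableSet S := by
    have hres : Continuous (Ω.restrict f) := hf.restrict
    have h1 : MeasurableSet ((Ω.restrict f) ⁻¹' ({0} : Set ℝ)) :=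
      (isClosed_singleton.preimage hres).measurableSet
    have himg : MeasurableSet (Subtype.val '' ((Ω.restrict f) ⁻¹' ({0} : Set ℝ))) :=
      hΩ.subtype_image h1
    have : S = Subtype.val '' ((Ω.restrict f) ⁻¹' ({0} : Set ℝ)) := by
      ext y
      constructor
      · rintro ⟨hy, hfy⟩
        exact ⟨⟨y, hy⟩, by simpa [Set.restrict] using hfy, rfl⟩
      · rintro ⟨⟨z, hz⟩, hfz, rfl⟩
        exact ⟨hz, by simpa [Set.restrict] using hfz⟩
    rwa [this]
  set L : ℝ := ∫ y in S, p y with hL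
  -- denominator tends to L
  have hZ : Tendsto (fun k : ℝ => ∫ t in Ω, Real.exp (-k * f t) * p t) atTop (nhds L) := by
    have key : Tendsto (fun k : ℝ => ∫ t in Ω, Real.exp (-k * f t) * p t) atTop
        (nhds (∫ t in Ω, S.indicator p t)) := by
      apply tendsto_integral_filter_of_dominated_convergence (bound := p)
      · filter_upwards with k
        have hfm : AEMeasurable f (volume.restrict Ω) := hf.aemeasurable hΩ
        have hpm : AEStronglyMeasurable p (volume.restrict Ω) :=
          hp_integrable.aestronglyMeasurable.restrict
        exact ((Real.measurable_exp.comp_aemeasurable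
          (hfm.const_mul (-k))).aestronglyMeasurable).mul hpm
      · filter_upwards [eventually_ge_atTop (0 : ℝ)] with k hk
        filter_upwards [ae_restrict_mem hΩ] with t ht
        have h1 : Real.exp (-k * f t) ≤ 1 := by
          rw [← Real.exp_zero]
          apply Real.exp_le_exp.2
          have := hfnn t ht
          nlinarith
        have hp := (hp_pos t).le
        rw [Real.norm_eq_abs, abs_of_nonneg (by positivity)]
        calc Real.exp (-k * f t) * p t ≤ 1 * p t := by
              exact mul_le_mul_of_nonneg_right h1 hp
          _ = p t := one_mul _
      · exact hp_integrable.restrict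
      · filter_upwards [ae_restrict_mem hΩ] with t ht
        rcases eq_or_lt_of_le (hfnn t ht) with h0 | h0
        · have htS : t ∈ S := ⟨ht, h0.symm⟩
          simp only [← h0, mul_zero, neg_zero, Real.exp_zero, one_mul,
            Set.indicator_of_mem htS]
          exact tendsto_const_nhds
        · have htS : t ∉ S := fun hmem => by
            have := hmem.2; linarith
          rw [Set.indicator_of_notMem htS]
          have : Tendsto (fun k : ℝ => Real.exp (-k * f t)) atTop (nhds 0) := by
            have h1 : Tendsto (fun k : ℝ => -k * f t) atTop atBot := by
              have := (tendsto_neg_atBot_iff (α := ℝ)).2 tendsto_id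
              exact Tendsto.atBot_mul_const h0 (by simpa using this)
            exact Real.tendsto_exp_atBot.comp h1
          simpa using this.mul_const (p t)
      all_goals infer_instance
    have : (∫ t in Ω, S.indicator p t) = L := by
      rw [setIntegral_indicator hS, Set.inter_eq_right.mpr hSsub]
    rwa [this] at key
  have hLpos : (0 : ℝ) < L := hpos
  simp only [hm, hfx, mul_zero, neg_zero, Real.exp_zero, one_mul]
  exact Tendsto.div tendsto_const_nhds hZ (ne_of_gt hLpos)
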